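/- Let ε ∈ ℝ and let Φ_ε be the Kahan–Hirota–Kimura map of the vector field ẋ = x(x+y−2), ẏ = −x(2x+y−3), given explicitly by Φ_ε(x,y) = ( (ε(ε+1)x² + εxy + (1−2ε)x)/D(x,y), (ε(2ε−4)x² − ε(ε+3)xy + 6εx − εy² + (2ε+1)y)/D(x,y) ) with D(x,y) = 2ε²x² − ε(ε+1)x − εy + 2ε + 1. Then the rational function V(x,y) = −((5ε²−2)x² − 2xy − y² + 6x + 4y)/(2ε²x² + 2) is a first integral of Φ_ε: for every (x,y) ∈ ℝ² with D(x,y) ≠ 0, V(Φ_ε(x,y)) = V(x,y). -/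
import Mathlib


/-- Denominator of the Kahan–Hirota–Kimura map `Φ_ε` of the system
`ẋ = x(x+y-2)`, `ẏ = -x(2x+y-3)`. -/
noncomputable def Dps (ε x y : ℝ) : ℝ :=
  2 * ε ^ 2 * x ^ 2 - ε * (ε + 1) * x - ε * y + 2 * ε + 1

/-- The Kahan–Hirota–Kimura map `Φ_ε` of the system `ẋ = x(x+y-2)`, `ẏ = -x(2x+y-3)`. -/
noncomputable def Phips (ε : ℝ) (q : ℝ × ℝ) : ℝ × ℝ :=
  ((ε * (ε + 1) * q.1 ^ 2 + ε * q.1 * q.2 + (1 - 2 * ε) * q.1) / Dps ε q.1 q.2,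
   (ε * (2 * ε - 4) * q.1 ^ 2 - ε * (ε + 3) * q.1 * q.2 + 6 * ε * q.1 - ε * q.2 ^ 2
      + (2 * ε + 1) * q.2) / Dps ε q.1 q.2)

/-- The invariant conic `C_h` of `Φ_ε`. -/
def Cps (ε h : ℝ) : Set (ℝ × ℝ) :=
  {q : ℝ × ℝ | (2 - 5 * ε ^ 2 - 2 * ε ^ 2 * h) * q.1 ^ 2 + 2 * q.1 * q.2 + q.2 ^ 2
      - 6 * q.1 - 4 * q.2 - 2 * h = 0}

set_option maxHeartbeats 1000000 in
/-- The rational function `V` is a first integral of the KHK map `Φ_ε`: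
`V(Φ_ε(x,y)) = V(x,y)` wherever `D(x,y) ≠ 0`. -/
theorem stmt_3 (ε : ℝ) (x y : ℝ) (hD : Dps ε x y ≠ 0) :
    -(((5 * ε ^ 2 - 2) * (Phips ε (x, y)).1 ^ 2 - 2 * (Phips ε (x, y)).1 * (Phips ε (x, y)).2
        - (Phips ε (x, y)).2 ^ 2 + 6 * (Phips ε (x, y)).1 + 4 * (Phips ε (x, y)).2) /
      (2 * ε ^ 2 * (Phips ε (x, y)).1 ^ 2 + 2)) =
    -(((5 * ε ^ 2 - 2) * x ^ 2 - 2 * x * y - y ^ 2 + 6 * x + 4 * y) /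
      (2 * ε ^ 2 * x ^ 2 + 2)) := by
  simp only [Phips]
  set D := Dps ε x y with hDdef
  set N1 : ℝ := ε * (ε + 1) * x ^ 2 + ε * x * y + (1 - 2 * ε) * x with hN1
  set N2 : ℝ := ε * (2 * ε - 4) * x ^ 2 - ε * (ε + 3) * x * y + 6 * ε * x - ε * y ^ 2
      + (2 * ε + 1) * y with hN2
  have h1 : (2 * ε ^ 2 * x ^ 2 + 2 : ℝ) ≠ 0 := by positivity
  have hD2 : 0 < D ^ 2 := by positivity
  have hE : (0:ℝ) < 2 * ε ^ 2 * N1 ^ 2 + 2 * D ^ 2 := by positivity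
  have L : -(((5 * ε ^ 2 - 2) * (N1 / D) ^ 2 - 2 * (N1 / D) * (N2 / D) - (N2 / D) ^ 2
        + 6 * (N1 / D) + 4 * (N2 / D)) / (2 * ε ^ 2 * (N1 / D) ^ 2 + 2)) =
      -(((5 * ε ^ 2 - 2) * N1 ^ 2 - 2 * N1 * N2 - N2 ^ 2 + 6 * N1 * D + 4 * N2 * D) /
        (2 * ε ^ 2 * N1 ^ 2 + 2 * D ^ 2)) := by
    rw [div_pow, div_pow, neg_inj, div_eq_div_iff (by positivity) hE.ne']
    field_simp
  rw [L, neg_inj, div_eq_div_iff hE.ne' h1, hN1, hN2, hDdef, Dps]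
  ring
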